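/- arXiv:2210.08564 — 2 statements merged into one kernel-verified Lean document; each statement's English description precedes it below -/
import Mathlib

section
/- For any positive semidefinite Hermitian matrices A, B of size n×n, if tr(AB) = tr(A)·tr(B) and tr(A) ≠ 0 and tr(B) ≠ 0, then A and B have rank at most one. -/
/-!
Diagonalise `A = U diag(λ) U*` and put `m i = (U* B U) i i`. Both `λ` and `m` are nonnegative,
`tr A = ∑ λ i`, `tr B = ∑ m i` and `tr (A B) = ∑ λ i * m i`. Since `m i ≤ ∑ m`, equality in
`∑ λ i * m i ≤ (∑ λ) (∑ m)` forces `m i = ∑ m` whenever `λ i ≠ 0`; two such indices would give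
`2 ∑ m ≤ ∑ m`, impossible when `tr B ≠ 0`. So `A` has at most one nonzero eigenvalue, and
symmetrically for `B`.
-/

open Matrix ComplexOrder

theorem subsingleton_ne_zero_of_sum_mul_eq_sum_mul_sum {ι R : Type*} [Fintype ι]
    [CommRing R] [IsDomain R] [PartialOrder R] [IsOrderedRing R] {l m : ι → R}
    (hl : ∀ i, 0 ≤ l i) (hm : ∀ i, 0 ≤ m i) (hsum : ∑ i, m i ≠ 0)
    (h : ∑ i, l i * m i = (∑ i, l i) * ∑ i, m i) :
    {i | l i ≠ 0}.Subsingleton := by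
  classical
  set S := ∑ i, m i
  have hm_le : ∀ i, m i ≤ S := fun i => Finset.single_le_sum (fun k _ => hm k) (Finset.mem_univ i)
  have hlm : ∀ i ∈ Finset.univ, l i * m i = l i * S := by
    rw [← Finset.sum_eq_sum_iff_of_le fun i _ => mul_le_mul_of_nonneg_left (hm_le i) (hl i),
      ← Finset.sum_mul, h]
  have hm_eq : ∀ i, l i ≠ 0 → m i = S := fun i hi => mul_left_cancel₀ hi (hlm i (Finset.mem_univ i))
  intro i hi k hk
  by_contra hik
  have hpair : m i + m k ≤ S := by
    simpa [Finset.sum_pair hik] using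
      Finset.sum_le_sum_of_subset_of_nonneg (Finset.subset_univ {i, k}) fun j _ _ => hm j
  rw [hm_eq i hi, hm_eq k hk] at hpair
  exact hsum (le_antisymm (by simpa using hpair) (Finset.sum_nonneg fun j _ => hm j))

namespace Matrix

variable {𝕜 n : Type*} [RCLike 𝕜] [Fintype n] [DecidableEq n]

theorem trace_star_mul_mul_unitary (U : unitary (Matrix n n 𝕜)) (B : Matrix n n 𝕜) :
    (star (U : Matrix n n 𝕜) * B * U).trace = B.trace := by
  rw [trace_mul_cycle]
  simp

theorem IsHermitian.trace_mul_eq_sum_eigenvalues_mul {A : Matrix n n 𝕜} (hA : A.IsHermitian)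
    (B : Matrix n n 𝕜) :
    (A * B).trace = ∑ i, (hA.eigenvalues i : 𝕜) *
      (star (hA.eigenvectorUnitary : Matrix n n 𝕜) * B * hA.eigenvectorUnitary) i i := by
  conv_lhs => rw [hA.spectral_theorem, Unitary.conjStarAlgAut_apply]
  rw [mul_assoc, mul_assoc, trace_mul_comm, mul_assoc, ← mul_assoc, trace]
  simp [diagonal_mul, Matrix.mul_assoc]

theorem PosSemidef.rank_le_one_of_trace_mul_eq {A B : Matrix n n 𝕜}
    (hA : A.PosSemidef) (hB : B.PosSemidef)
    (heq : (A * B).trace = A.trace * B.trace) (hB0 : B.trace ≠ 0) : A.rank ≤ 1 := by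
  set U := hA.1.eigenvectorUnitary
  set M := star (U : Matrix n n 𝕜) * B * U
  have hM : M.PosSemidef := by
    simpa only [M, star_eq_conjTranspose] using hB.conjTranspose_mul_mul_same (U : Matrix n n 𝕜)
  have hM0 : M.trace ≠ 0 := by rwa [trace_star_mul_mul_unitary]
  have hAM : ∑ i, (hA.1.eigenvalues i : 𝕜) * M i i = A.trace * M.trace := by
    rw [← hA.1.trace_mul_eq_sum_eigenvalues_mul, trace_star_mul_mul_unitary, heq]
  have hne : {i | hA.1.eigenvalues i ≠ 0}.Subsingleton := by
    simpa using subsingleton_ne_zero_of_sum_mul_eq_sum_mul_sum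
      (l := fun i => (hA.1.eigenvalues i : 𝕜)) (m := fun i => M i i)
      (fun i => by simpa using hA.eigenvalues_nonneg i) (fun _ => hM.diag_nonneg) hM0
      (by rw [hAM, hA.1.trace_eq_sum_eigenvalues]; rfl)
  rw [hA.1.rank_eq_card_non_zero_eigs, Fintype.card_le_one_iff_subsingleton]
  exact hne.coe_sort

end Matrix

theorem rank_le_one_of_trace_mul_eq (n : ℕ) (A B : Matrix (Fin n) (Fin n) ℂ)
    (hA : A.PosSemidef) (hB : B.PosSemidef)
    (heq : (A * B).trace = A.trace * B.trace)
    (hAtr : A.trace ≠ 0) (hBtr : B.trace ≠ 0) :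
    A.rank ≤ 1 ∧ B.rank ≤ 1 :=
  ⟨hA.rank_le_one_of_trace_mul_eq hB heq hBtr,
    hB.rank_le_one_of_trace_mul_eq hA (by rw [trace_mul_comm, heq, mul_comm]) hAtr⟩
end

section
/- If X₁, X₂ are N×N Hermitian PSD matrices with tr(E_n X₁) = 1 and tr(E_n X₂) = 1 for all n (so tr X₁ = tr X₂ = N) and tr(X₁X₂) = tr(X₁)tr(X₂), then X₁ = X₂ and there exists x ∈ ℂ^N with X₁ = x xᴴ and |x_n| = 1 for all n. -/
open Matrix ComplexOrder

/-!
A positive semidefinite matrix with unit diagonal has all entries in the closed unit disc: the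
quadratic form at `e_i - X_ji e_j` equals `X_ii - |X_ij|²`. Hence `tr(X₁X₂) = ∑_{i,j} X₁_ij X₂_ji`
is a sum of `N²` numbers of modulus at most one; it equals `N² = tr X₁ · tr X₂` only if every term
is `1`. Then every `|X₁_ij| = 1` and `X₂_ji = conj X₁_ij = X₁_ji`. Finally `|X_ij|² = X_ii` makes
the quadratic form vanish at `e_i - X_ji e_j`, so column `i` is `X_ji` times column `j`, which
writes `X₁` as `x xᴴ` with `x` its `j`-th column.
-/

namespace RCLike

variable {𝕜 : Type*} [RCLike 𝕜]

theorem eq_one_of_norm_le_one_of_re_eq_one {z : 𝕜} (hz : ‖z‖ ≤ 1) (hre : re z = 1) : z = 1 := by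
  have hsq : re z * re z + im z * im z ≤ 1 := by
    rw [← norm_sq_eq_def]; nlinarith [norm_nonneg z]
  refine ext (by simp [hre]) ?_
  rw [hre] at hsq
  simpa using (mul_self_eq_zero.1 (le_antisymm (by linarith) (mul_self_nonneg _)))

theorem eq_one_of_norm_le_one_of_sum_eq_card {ι : Type*} [Fintype ι] {z : ι → 𝕜}
    (hz : ∀ i, ‖z i‖ ≤ 1) (hsum : ∑ i, z i = Fintype.card ι) (i : ι) : z i = 1 := by
  have hnonneg : ∀ i, 0 ≤ 1 - re (z i) := fun i => sub_nonneg.2 ((re_le_norm _).trans (hz i))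
  have hzero : ∑ i, (1 - re (z i)) = 0 := by
    simp [Finset.sum_sub_distrib, ← map_sum, hsum]
  have hi := (Finset.sum_eq_zero_iff_of_nonneg fun i _ => hnonneg i).1 hzero i (Finset.mem_univ i)
  exact eq_one_of_norm_le_one_of_re_eq_one (hz i) (by linarith)

theorem norm_eq_one_and_eq_star_of_mul_eq_one {a b : 𝕜} (ha : ‖a‖ ≤ 1) (hb : ‖b‖ ≤ 1)
    (hab : a * b = 1) : ‖a‖ = 1 ∧ b = star a := by
  have hnorm : ‖a‖ * ‖b‖ = 1 := by rw [← norm_mul, hab, norm_one]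
  have ha1 : ‖a‖ = 1 := by nlinarith [norm_nonneg a, norm_nonneg b]
  refine ⟨ha1, mul_left_cancel₀ (left_ne_zero_of_mul_eq_one hab) ?_⟩
  rw [hab, ← starRingEnd_apply, mul_conj, ha1]; simp

end RCLike

namespace Matrix

variable {𝕜 n : Type*} [RCLike 𝕜] [Fintype n] [DecidableEq n] {X : Matrix n n 𝕜}

theorem IsHermitian.star_dotProduct_mulVec_single_sub_smul_single (hX : X.IsHermitian)
    {i j : n} (hjj : X j j = 1) :
    star (Pi.single i 1 - X j i • Pi.single j 1 : n → 𝕜) ⬝ᵥ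
      X *ᵥ (Pi.single i 1 - X j i • Pi.single j 1) = X i i - (‖X i j‖ ^ 2 : 𝕜) := by
  simp only [← hX.apply j i, RCLike.star_def, star_sub, Pi.star_single, star_one, star_smul,
    RingHomCompTriple.comp_apply, RingHom.id_apply, mulVec_sub, mulVec_single, MulOpposite.op_one,
    one_smul, mulVec_smul, dotProduct_sub, sub_dotProduct, single_dotProduct, col_apply, one_mul,
    smul_dotProduct, smul_eq_mul, dotProduct_smul, hjj, mul_one, sub_self, mul_zero, sub_zero,
    sub_right_inj]
  linear_combination RCLike.mul_conj (X i j)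

namespace PosSemidef

theorem norm_sq_apply_le (hX : X.PosSemidef) {i j : n} (hjj : X j j = 1) :
    (‖X i j‖ ^ 2 : 𝕜) ≤ X i i := by
  have := hX.dotProduct_mulVec_nonneg (Pi.single i 1 - X j i • Pi.single j 1)
  rwa [hX.isHermitian.star_dotProduct_mulVec_single_sub_smul_single hjj, sub_nonneg] at this

theorem norm_apply_le_one (hX : X.PosSemidef) (hdiag : ∀ i, X i i = 1) (i j : n) :
    ‖X i j‖ ≤ 1 := by
  have := hX.norm_sq_apply_le (i := i) (hdiag j)
  rw [hdiag i] at this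
  exact pow_le_one_iff_of_nonneg (norm_nonneg _) two_ne_zero |>.1 (mod_cast this)

theorem col_eq_smul_col_of_norm_sq_apply_eq (hX : X.PosSemidef) {i j : n} (hjj : X j j = 1)
    (hi : (‖X i j‖ ^ 2 : 𝕜) = X i i) : X.col i = X j i • X.col j := by
  have hzero := (hX.dotProduct_mulVec_zero_iff (Pi.single i 1 - X j i • Pi.single j 1)).1 (by
    rw [hX.isHermitian.star_dotProduct_mulVec_single_sub_smul_single hjj, hi, sub_self])
  rwa [mulVec_sub, mulVec_smul, mulVec_single_one, mulVec_single_one, sub_eq_zero] at hzero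

theorem eq_vecMulVec_col_of_norm_sq_apply_eq (hX : X.PosSemidef) {j : n} (hjj : X j j = 1)
    (h : ∀ i, (‖X i j‖ ^ 2 : 𝕜) = X i i) : X = vecMulVec (X.col j) (star (X.col j)) := by
  ext k i
  rw [vecMulVec_apply, ← col_apply X i k, hX.col_eq_smul_col_of_norm_sq_apply_eq hjj (h i),
    Pi.smul_apply, smul_eq_mul, mul_comm, Pi.star_apply, col_apply, col_apply,
    hX.isHermitian.apply]

theorem apply_mul_apply_eq_one_of_trace_mul_eq {X₁ X₂ : Matrix n n 𝕜} (h₁ : X₁.PosSemidef)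
    (h₂ : X₂.PosSemidef) (hdiag₁ : ∀ i, X₁ i i = 1) (hdiag₂ : ∀ i, X₂ i i = 1)
    (htr : (X₁ * X₂).trace = X₁.trace * X₂.trace) (i j : n) : X₁ i j * X₂ j i = 1 := by
  have htrace : ∀ {X : Matrix n n 𝕜}, (∀ i, X i i = 1) → X.trace = Fintype.card n := fun hd => by
    simp [trace, hd]
  refine RCLike.eq_one_of_norm_le_one_of_sum_eq_card
    (z := fun p : n × n => X₁ p.1 p.2 * X₂ p.2 p.1) (fun p => ?_) ?_ (i, j)
  · rw [norm_mul]
    exact mul_le_one₀ (h₁.norm_apply_le_one hdiag₁ _ _) (norm_nonneg _)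
      (h₂.norm_apply_le_one hdiag₂ _ _)
  · rw [htrace hdiag₁, htrace hdiag₂] at htr
    rw [Fintype.sum_prod_type, Fintype.card_prod, Nat.cast_mul, ← htr]
    simp [trace, mul_apply]

end PosSemidef

end Matrix

theorem eq_and_rank_one_unimodular_of_trace_eq (N : ℕ)
    (X₁ X₂ : Matrix (Fin N) (Fin N) ℂ)
    (h₁ : X₁.PosSemidef) (h₂ : X₂.PosSemidef)
    (hd₁ : ∀ n : Fin N, (Matrix.single n n (1 : ℂ) * X₁).trace = 1)
    (hd₂ : ∀ n : Fin N, (Matrix.single n n (1 : ℂ) * X₂).trace = 1)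
    (heq : (X₁ * X₂).trace = X₁.trace * X₂.trace) :
    X₁ = X₂ ∧ ∃ x : Fin N → ℂ,
      X₁ = Matrix.vecMulVec x (star x) ∧ ∀ n, ‖x n‖ = 1 := by
  have hdiag₁ : ∀ n, X₁ n n = 1 := fun n => by simpa [trace_single_mul] using hd₁ n
  have hdiag₂ : ∀ n, X₂ n n = 1 := fun n => by simpa [trace_single_mul] using hd₂ n
  have hunit : ∀ i j, ‖X₁ i j‖ = 1 ∧ X₂ j i = star (X₁ i j) := fun i j =>
    RCLike.norm_eq_one_and_eq_star_of_mul_eq_one (h₁.norm_apply_le_one hdiag₁ i j)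
      (h₂.norm_apply_le_one hdiag₂ j i)
      (h₁.apply_mul_apply_eq_one_of_trace_mul_eq h₂ hdiag₁ hdiag₂ heq i j)
  refine ⟨Matrix.ext fun j i => by rw [(hunit i j).2, h₁.isHermitian.apply], ?_⟩
  rcases isEmpty_or_nonempty (Fin N) with _ | ⟨⟨j⟩⟩
  · exact ⟨0, Subsingleton.elim _ _, isEmptyElim⟩
  refine ⟨X₁.col j, h₁.eq_vecMulVec_col_of_norm_sq_apply_eq (hdiag₁ j) fun i => ?_,
    fun i => (hunit i j).1⟩
  rw [(hunit i j).1, hdiag₁ i]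
  norm_num
end
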